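/- Let D be a derivation of a commutative algebra A (with respect to its product). If D satisfies a 'PGI' identity on connected n-fold products, D((F^{⊗n})_c) = -i n (G ⊗ F^{⊗(n-1)})_c for all n, and every n-fold product decomposes as F^{⊗n}-product = Σ over partitions of products of connected parts, then D satisfies the corresponding identity on the full products: D(T_n(F^{⊗n})) = -i n T_n(G ⊗ F^{⊗(n-1)}), where T_n(F^{⊗n}) = Σ_P Π_{J∈P} T_{|J|,c}(F^{⊗|J|}) and T_n(G ⊗ F^{⊗(n-1)}) = Σ_P Σ_{J∋ marked slot} T_{|J|,c}(G ⊗ F^{⊗(|J|-1)}) Π_{J'≠J} T_{|J'|,c}(F^{⊗|J'|}). -/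

import Mathlib

open scoped Classical

/-- The finite set of all partitions of `{0,…,n-1}` into pairwise disjoint nonempty
blocks covering everything. -/
noncomputable def partitionsOf (n : ℕ) : Finset (Finset (Finset (Fin n))) :=
  Finset.univ.filter fun P =>
    ∅ ∉ P ∧ (P : Set (Finset (Fin n))).PairwiseDisjoint id ∧ P.sup id = Finset.univ

/-!
By the Leibniz rule, `D` hits one block `J` of each partition at a time, and the connected
identity turns that block into `-i |J|` times the block with `G` inserted. Counting `|J|` as the
number of slots `x ∈ J` rewrites the result as a sum over a marked slot `x` of the sums over
partitions with `G` in the block containing `x`. Relabelling by the transposition `(0 x)` permutes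
the partitions and shows that every slot contributes as much as slot `0`, whence the factor `n`.
-/

theorem Derivation.leibniz_prod {R A M ι : Type*} [DecidableEq ι] [CommSemiring R]
    [CommSemiring A] [AddCommMonoid M] [Algebra R A] [Module A M] [Module R M]
    (D : Derivation R A M) (s : Finset ι) (f : ι → A) :
    D (∏ i ∈ s, f i) = ∑ i ∈ s, (∏ j ∈ s.erase i, f j) • D (f i) := by
  induction s using Finset.induction_on with
  | empty => simp
  | @insert a s ha ih =>
    rw [Finset.prod_insert ha, D.leibniz, ih, Finset.sum_insert ha, Finset.erase_insert ha,
      Finset.smul_sum, add_comm]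
    congr 1
    refine Finset.sum_congr rfl fun i hi => ?_
    rw [Finset.erase_insert_of_ne (ne_of_mem_of_not_mem hi ha).symm, Finset.prod_insert
      (fun h => ha (Finset.mem_of_mem_erase h)), smul_smul]

theorem Finset.sum_card_nsmul_eq_sum_sum_filter_mem {α M : Type*} [Fintype α] [DecidableEq α]
    [AddCommMonoid M] (P : Finset (Finset α)) (f : Finset α → M) :
    ∑ J ∈ P, J.card • f J = ∑ x, ∑ J ∈ P with x ∈ J, f J := by
  simp_rw [Finset.sum_filter]
  rw [Finset.sum_comm]
  refine Finset.sum_congr rfl fun J _ => ?_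
  rw [Finset.sum_ite_mem, Finset.univ_inter, Finset.sum_const]

theorem finsetCongr_finsetCongr_mem_partitionsOf {n m : ℕ} (e : Fin n ≃ Fin m)
    {P : Finset (Finset (Fin n))} (hP : P ∈ partitionsOf n) :
    e.finsetCongr.finsetCongr P ∈ partitionsOf m := by
  simp only [partitionsOf, Finset.mem_filter, Finset.mem_univ, true_and,
    Equiv.finsetCongr_apply] at hP ⊢
  obtain ⟨hempty, hdisj, hcover⟩ := hP
  refine ⟨?_, ?_, ?_⟩
  · simpa using hempty
  · rw [Finset.coe_map, (Function.Embedding.injective _).injOn.pairwiseDisjoint_image]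
    intro J hJ K hK hJK
    simpa [Function.onFun] using hdisj hJ hK hJK
  · rw [Finset.sup_map, ← Finset.map_univ_equiv e, ← hcover,
      Finset.apply_sup_eq_sup_comp (Finset.map e.toEmbedding) (fun _ _ => Finset.map_union _ _)
        (Finset.map_empty _)]
    rfl

theorem finsetCongr_finsetCongr_mem_partitionsOf_iff {n m : ℕ} (e : Fin n ≃ Fin m)
    {P : Finset (Finset (Fin n))} :
    e.finsetCongr.finsetCongr P ∈ partitionsOf m ↔ P ∈ partitionsOf n :=
  ⟨fun h => by
    simpa only [← Equiv.finsetCongr_symm, Equiv.symm_apply_apply] using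
      finsetCongr_finsetCongr_mem_partitionsOf e.symm h,
    finsetCongr_finsetCongr_mem_partitionsOf e⟩

theorem sum_partitionsOf_sum_filter_mem_eq {n : ℕ} {M : Type*} [AddCommMonoid M]
    (Φ : Finset (Finset (Fin n)) → Finset (Fin n) → M)
    (hΦ : ∀ (e : Equiv.Perm (Fin n)) P J,
      Φ (e.finsetCongr.finsetCongr P) (e.finsetCongr J) = Φ P J)
    (x y : Fin n) :
    ∑ P ∈ partitionsOf n, ∑ J ∈ P with x ∈ J, Φ P J =
      ∑ P ∈ partitionsOf n, ∑ J ∈ P with y ∈ J, Φ P J := by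
  set e := Equiv.swap x y
  refine Finset.sum_equiv e.finsetCongr.finsetCongr
    (fun P => (finsetCongr_finsetCongr_mem_partitionsOf_iff e).symm) fun P _ => ?_
  refine Finset.sum_equiv e.finsetCongr (fun J => ?_) fun J _ => (hΦ e P J).symm
  rw [Finset.mem_filter, Finset.mem_filter, Equiv.finsetCongr_apply _ P, Finset.mem_map_equiv,
    Equiv.symm_apply_apply, Equiv.finsetCongr_apply, Finset.mem_map_equiv, Equiv.symm_swap,
    Equiv.swap_apply_right]

theorem mul_prod_erase_card_finsetCongr {n : ℕ} {A : Type*} [CommMonoid A] (g h : ℕ → A)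
    (e : Equiv.Perm (Fin n)) (P : Finset (Finset (Fin n))) (J : Finset (Fin n)) :
    h (e.finsetCongr J).card * ∏ J' ∈ (e.finsetCongr.finsetCongr P).erase (e.finsetCongr J),
      g J'.card = h J.card * ∏ J' ∈ P.erase J, g J'.card := by
  rw [Equiv.finsetCongr_apply _ P, ← Equiv.coe_toEmbedding, ← Finset.map_erase, Finset.prod_map]
  simp

theorem card_pos_of_mem_partitionsOf {n : ℕ} {P : Finset (Finset (Fin n))}
    (hP : P ∈ partitionsOf n) {J : Finset (Fin n)} (hJ : J ∈ P) : 0 < J.card :=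
  Finset.card_pos.mpr <| Finset.nonempty_iff_ne_empty.mpr fun h =>
    (Finset.mem_filter.mp hP).2.1 (h ▸ hJ)

theorem pgi_connected_to_full_general {A : Type*} [CommRing A] [Algebra ℂ A]
    (D : A →ₗ[ℂ] A) (hder : ∀ x y : A, D (x * y) = D x * y + x * D y)
    (Tc : (m : ℕ) → (Fin m → A) → A)
    (F G : A)
    (hPGI : ∀ n : ℕ, 1 ≤ n →
      D (Tc n fun _ => F) =
        ((-Complex.I) * (n : ℂ)) • Tc n (fun k : Fin n => if (k : ℕ) = 0 then G else F)) :
    ∀ (n : ℕ) (hn : 1 ≤ n),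
      D (∑ P ∈ partitionsOf n, ∏ J ∈ P, Tc J.card fun _ => F) =
        ((-Complex.I) * (n : ℂ)) •
          ∑ P ∈ partitionsOf n,
            ∑ J ∈ P.filter (fun J => (⟨0, hn⟩ : Fin n) ∈ J),
              Tc J.card (fun k : Fin J.card => if (k : ℕ) = 0 then G else F) *
                ∏ J' ∈ P.erase J, Tc J'.card fun _ => F := by
  intro n hn
  let g : ℕ → A := fun m => Tc m fun _ => F
  let h : ℕ → A := fun m => Tc m fun k : Fin m => if (k : ℕ) = 0 then G else F
  let Φ : Finset (Finset (Fin n)) → Finset (Fin n) → A := fun P J =>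
    h J.card * ∏ J' ∈ P.erase J, g J'.card
  have hleibniz := (Derivation.mk' D fun x y => by
    rw [hder, smul_eq_mul, smul_eq_mul, mul_comm y, add_comm]).leibniz_prod (ι := Finset (Fin n))
  simp only [Derivation.coe_mk'] at hleibniz
  have hblocks : ∀ P ∈ partitionsOf n,
      D (∏ J ∈ P, Tc J.card fun _ => F) = (-Complex.I) • ∑ J ∈ P, J.card • Φ P J := by
    intro P hP
    rw [hleibniz, Finset.smul_sum]
    refine Finset.sum_congr rfl fun J hJ => ?_
    rw [hPGI _ (card_pos_of_mem_partitionsOf hP hJ), smul_eq_mul, mul_smul_comm, mul_smul,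
      Nat.cast_smul_eq_nsmul, mul_comm]
  let S : Fin n → A := fun x => ∑ P ∈ partitionsOf n, ∑ J ∈ P with x ∈ J, Φ P J
  calc D (∑ P ∈ partitionsOf n, ∏ J ∈ P, Tc J.card fun _ => F)
      = (-Complex.I) • ∑ x, S x := by
        simp only [S, map_sum, Finset.sum_congr rfl hblocks, ← Finset.smul_sum,
          Finset.sum_card_nsmul_eq_sum_sum_filter_mem]
        rw [Finset.sum_comm]
    _ = (-Complex.I) • ∑ _x : Fin n, S ⟨0, hn⟩ := by
        simp only [S, sum_partitionsOf_sum_filter_mem_eq Φ (mul_prod_erase_card_finsetCongr g h) _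
          ⟨0, hn⟩]
    _ = _ := by
        rw [Finset.sum_const, Finset.card_univ, Fintype.card_fin, ← Nat.cast_smul_eq_nsmul ℂ,
          smul_smul]

/-- If a derivation `D` of a commutative ℂ-algebra satisfies the PGI identity on
connected time-ordered products, `D(T_{n,c}(F^{⊗n})) = -i n T_{n,c}(G ⊗ F^{⊗(n-1)})`,
then it satisfies the corresponding identity for the full time-ordered products,
defined from the connected ones by summing over all partitions (the block containing
the marked slot carrying the `G`-insertion). -/
theorem pgi_connected_to_full {A : Type*} [CommRing A] [Algebra ℂ A]
    (D : A →ₗ[ℂ] A) (hder : ∀ x y : A, D (x * y) = D x * y + x * D y)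
    (Tc : (m : ℕ) → (Fin m → A) → A)
    (hTsymm : ∀ (m : ℕ) (F : Fin m → A) (σ : Equiv.Perm (Fin m)), Tc m (F ∘ σ) = Tc m F)
    (F G : A)
    (hPGI : ∀ n : ℕ, 1 ≤ n →
      D (Tc n fun _ => F) =
        ((-Complex.I) * (n : ℂ)) • Tc n (fun k : Fin n => if (k : ℕ) = 0 then G else F)) :
    ∀ (n : ℕ) (hn : 1 ≤ n),
      D (∑ P ∈ partitionsOf n, ∏ J ∈ P, Tc J.card fun _ => F) =
        ((-Complex.I) * (n : ℂ)) •
          ∑ P ∈ partitionsOf n,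
            ∑ J ∈ P.filter (fun J => (⟨0, hn⟩ : Fin n) ∈ J),
              Tc J.card (fun k : Fin J.card => if (k : ℕ) = 0 then G else F) *
                ∏ J' ∈ P.erase J, Tc J'.card fun _ => F :=
  pgi_connected_to_full_general D hder Tc F G hPGI
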